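/- Let A, B, C be homogeneous polynomials of degree d+1 in variables X, Y, Z over ℂ such that X·A + Y·B + Z·C = 0. Then there exist homogeneous polynomials P, Q, R of degree d such that A = Z·Q − Y·R, B = X·R − Z·P, and C = Y·P − X·Q. -/

import Mathlib

/-!
Setting `X 0 = 0` in `X 0 * A + X 1 * B + X 2 * C = 0` leaves a relation `X 1 * b + X 2 * c = 0`,
which forces `b = X 2 * s`, `c = -(X 1 * s)` because `X 2` is prime. Lifting back, `B` and `C`
differ from `b` and `c` by multiples of `X 0`, and cancelling `X 0` in the original relation
expresses `A`. Taking homogeneous components of degree `d` makes the witnesses homogeneous.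
-/

open MvPolynomial

namespace MvPolynomial

variable {σ R : Type*}

theorem homogeneousComponent_X_mul [CommSemiring R] (i : σ) (n : ℕ) (q : MvPolynomial σ R) :
    homogeneousComponent (n + 1) (X i * q) = X i * homogeneousComponent n q := by
  let := gradedAlgebra (σ := σ) (R := R)
  simpa only [add_comm 1, DirectSum.decompose, Equiv.coe_fn_mk, decomposition.decompose'_apply]
    using DirectSum.coe_decompose_mul_add_of_left_mem (𝒜 := homogeneousSubmodule σ R)
      (b := q) (j := n) (isHomogeneous_X R i)

variable [CommRing R]

theorem IsHomogeneous.eq_X_mul_sub_X_mul_homogeneousComponent {n : ℕ} {j k : σ}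
    {a q r : MvPolynomial σ R} (ha : a.IsHomogeneous (n + 1)) (h : a = X k * q - X j * r) :
    a = X k * homogeneousComponent n q - X j * homogeneousComponent n r :=
  calc a = homogeneousComponent (n + 1) a := (homogeneousComponent_eq_self ha).symm
    _ = _ := by rw [h, map_sub, homogeneousComponent_X_mul, homogeneousComponent_X_mul]

theorem X_dvd_sub_aeval_update_zero [DecidableEq σ] (i : σ) (p : MvPolynomial σ R) :
    X i ∣ p - aeval (Function.update X i 0) p := by
  let I := Ideal.span {(X i : MvPolynomial σ R)}
  have hmk : Ideal.Quotient.mkₐ R I =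
      (Ideal.Quotient.mkₐ R I).comp (aeval (Function.update X i 0)) := by
    refine algHom_ext fun j ↦ ?_
    rcases eq_or_ne j i with rfl | hj
    · simp [I]
    · simp [hj]
  rw [← Ideal.mem_span_singleton, ← Ideal.Quotient.eq]
  exact AlgHom.congr_fun hmk p

variable [IsDomain R]

theorem exists_of_X_mul_add_X_mul_eq_zero {i j : σ} (hij : i ≠ j) {b c : MvPolynomial σ R}
    (h : X i * b + X j * c = 0) : ∃ s, b = X j * s ∧ c = -(X i * s) := by
  have hdvd : X j ∣ X i * b := ⟨-c, by linear_combination h⟩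
  obtain ⟨s, rfl⟩ := (X_prime.dvd_mul.mp hdvd).resolve_left (by simpa using hij.symm)
  refine ⟨s, rfl, ?_⟩
  have : X j * (c + X i * s) = 0 := by linear_combination h
  linear_combination (mul_eq_zero.mp this).resolve_left (X_ne_zero j)

theorem exists_cross_of_X_mul_add_X_mul_add_X_mul_eq_zero {i j k : σ}
    (hij : i ≠ j) (hik : i ≠ k) (hjk : j ≠ k) {a b c : MvPolynomial σ R}
    (h : X i * a + X j * b + X k * c = 0) :
    ∃ p q r : MvPolynomial σ R,
      a = X k * q - X j * r ∧ b = X i * r - X k * p ∧ c = X j * p - X i * q := by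
  classical
  let f : MvPolynomial σ R →ₐ[R] MvPolynomial σ R := aeval (Function.update X i 0)
  have hrestrict : X j * f b + X k * f c = 0 := by
    simpa [f, hij.symm, hik.symm] using congrArg f h
  obtain ⟨s, hb, hc⟩ := exists_of_X_mul_add_X_mul_eq_zero hjk hrestrict
  obtain ⟨r, hr⟩ := X_dvd_sub_aeval_update_zero i b
  obtain ⟨q, hq⟩ := X_dvd_sub_aeval_update_zero i c
  have ha : X i * (a + X j * r + X k * q) = 0 := by
    linear_combination h - X j * (hr + hb) - X k * (hq + hc)
  refine ⟨-s, -q, r, ?_, by linear_combination hr + hb, by linear_combination hq + hc⟩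
  linear_combination (mul_eq_zero.mp ha).resolve_left (X_ne_zero i)

end MvPolynomial

theorem stmt_0 (d : ℕ) (A B C : MvPolynomial (Fin 3) ℂ)
    (hA : A.IsHomogeneous (d + 1)) (hB : B.IsHomogeneous (d + 1))
    (hC : C.IsHomogeneous (d + 1))
    (h : X 0 * A + X 1 * B + X 2 * C = 0) :
    ∃ P Q R : MvPolynomial (Fin 3) ℂ,
      P.IsHomogeneous d ∧ Q.IsHomogeneous d ∧ R.IsHomogeneous d ∧
      A = X 2 * Q - X 1 * R ∧ B = X 0 * R - X 2 * P ∧ C = X 1 * P - X 0 * Q := by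
  obtain ⟨P, Q, R, hA', hB', hC'⟩ :=
    exists_cross_of_X_mul_add_X_mul_add_X_mul_eq_zero (by decide) (by decide) (by decide) h
  exact ⟨_, _, _, homogeneousComponent_isHomogeneous d P, homogeneousComponent_isHomogeneous d Q,
    homogeneousComponent_isHomogeneous d R, hA.eq_X_mul_sub_X_mul_homogeneousComponent hA',
    hB.eq_X_mul_sub_X_mul_homogeneousComponent hB', hC.eq_X_mul_sub_X_mul_homogeneousComponent hC'⟩
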